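/- arXiv:2407.01086 — 4 statements merged into one kernel-verified Lean document; each statement's English description precedes it below -/
import Mathlib

section
/- For s ≥ 2 and traffic intensity ρ = λ/(sμ) with 0 < ρ < 1, the Erlang C formula C(s, ρ) = [ (sρ）^s/s! · 1/(1−ρ) ] / [ Σ_{k=0}^{s−1} (sρ)^k/k! + (sρ)^s/s! · 1/(1−ρ) ] is strictly less than ρ^{√s}. (Harel's bound, used in eq. (13).) -/
/-!
Let `p j = s.descFactorial j / s ^ j` be the probability that `j` uniform draws from `s` items are
pairwise distinct, and let `J` be the number of distinct draws before the first repetition, so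
`P(J = j) = p j - p (j + 1)`. Reflecting the index of the Erlang sum and summing by parts gives
`C(s, ρ)⁻¹ = 𝔼[ρ⁻¹ ^ J]`. By Jensen, `𝔼[ρ⁻¹ ^ J] ≥ ρ⁻¹ ^ 𝔼[J]`, and `𝔼[J] = ∑_{j=1}^s p j` is
Ramanujan's `Q(s)`. Finally `Q(s) > √s`: since `𝔼[J] = Q(s)` and `𝔼[1 / J] = Q(s) / s`,
`𝔼[(J - √s)² / J] = 2 (Q(s) - √s)`, and the atom `J = 1` makes it positive.
-/

open Finset
open scoped Nat

noncomputable def erlangC (s : ℕ) (ρ : ℝ) : ℝ :=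
  ((s * ρ) ^ s / s ! * (1 / (1 - ρ))) /
    ((∑ k ∈ range s, (s * ρ) ^ k / k !) + (s * ρ) ^ s / s ! * (1 / (1 - ρ)))

theorem sum_range_succ_sub_mul {R : Type*} [CommRing R] (c f : ℕ → R) (n : ℕ) :
    ∑ j ∈ range (n + 1), (c j - c (j + 1)) * f j =
      c 0 * f 0 - c (n + 1) * f n + ∑ j ∈ range n, c (j + 1) * (f (j + 1) - f j) := by
  induction n with
  | zero => simp [sub_mul]
  | succ n ih => rw [sum_range_succ, ih, sum_range_succ]; ring

theorem sum_range_pow_div_factorial_eq_mul_sum_descFactorial {K : Type*} [Field K] [CharZero K]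
    {a : K} (ha : a ≠ 0) (n : ℕ) :
    ∑ k ∈ range n, a ^ k / k ! =
      a ^ n / n ! * ∑ j ∈ range n, n.descFactorial (j + 1) / a ^ (j + 1) := by
  rw [← sum_range_reflect, mul_sum]
  refine sum_congr rfl fun j hj => ?_
  have hj : j + 1 ≤ n := mem_range.1 hj
  have hd : (n.descFactorial (j + 1) : K) ≠ 0 := by
    exact_mod_cast (Nat.descFactorial_pos.2 hj).ne'
  rw [show n - 1 - j = n - (j + 1) by omega, ← Nat.factorial_mul_descFactorial hj,
    pow_sub₀ _ ha hj]
  push_cast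
  field_simp

noncomputable def noCollisionProb (s j : ℕ) : ℝ := s.descFactorial j / (s : ℝ) ^ j

@[simp]
theorem noCollisionProb_zero (s : ℕ) : noCollisionProb s 0 = 1 := by simp [noCollisionProb]

theorem noCollisionProb_one {s : ℕ} (hs : s ≠ 0) : noCollisionProb s 1 = 1 := by
  simp [noCollisionProb, hs]

@[simp]
theorem noCollisionProb_succ_self (s : ℕ) : noCollisionProb s (s + 1) = 0 := by
  simp [noCollisionProb]

theorem noCollisionProb_nonneg (s j : ℕ) : 0 ≤ noCollisionProb s j := by
  unfold noCollisionProb; positivity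

/-- The probability that, drawing uniformly from `s` items, the first repeat is draw `j + 1`. -/
noncomputable def firstCollisionProb (s j : ℕ) : ℝ :=
  noCollisionProb s j - noCollisionProb s (j + 1)

theorem firstCollisionProb_eq_mul_div {s : ℕ} (hs : s ≠ 0) (j : ℕ) :
    firstCollisionProb s j = j * noCollisionProb s j / s := by
  unfold firstCollisionProb noCollisionProb
  rw [Nat.descFactorial_succ]
  rcases le_or_gt j s with h | h
  · push_cast [h]
    field_simp
    ring
  · simp [Nat.descFactorial_eq_zero_iff_lt.2 h]

theorem firstCollisionProb_nonneg {s : ℕ} (hs : s ≠ 0) (j : ℕ) : 0 ≤ firstCollisionProb s j := by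
  rw [firstCollisionProb_eq_mul_div hs]
  have := noCollisionProb_nonneg s j
  positivity

theorem sum_firstCollisionProb_mul (s : ℕ) (f : ℕ → ℝ) :
    ∑ j ∈ range (s + 1), firstCollisionProb s j * f j =
      f 0 + ∑ j ∈ range s, noCollisionProb s (j + 1) * (f (j + 1) - f j) := by
  simpa [firstCollisionProb] using sum_range_succ_sub_mul (noCollisionProb s) f s

theorem sum_firstCollisionProb (s : ℕ) : ∑ j ∈ range (s + 1), firstCollisionProb s j = 1 := by
  simpa using sum_firstCollisionProb_mul s 1

noncomputable def ramanujanQ (s : ℕ) : ℝ := ∑ j ∈ range s, noCollisionProb s (j + 1)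

theorem sum_firstCollisionProb_mul_self (s : ℕ) :
    ∑ j ∈ range (s + 1), firstCollisionProb s j * j = ramanujanQ s := by
  simpa [ramanujanQ] using sum_firstCollisionProb_mul s (fun j => j)

theorem sum_firstCollisionProb_div_self {s : ℕ} (hs : s ≠ 0) :
    ∑ j ∈ range (s + 1), firstCollisionProb s j / j = ramanujanQ s / s := by
  rw [sum_range_succ', ramanujanQ, sum_div]
  simp only [firstCollisionProb_eq_mul_div hs, Nat.cast_zero, div_zero, add_zero]
  refine sum_congr rfl fun j _ => ?_
  field_simp

theorem sqrt_lt_ramanujanQ {s : ℕ} (hs : 2 ≤ s) : √s < ramanujanQ s := by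
  have hs0 : s ≠ 0 := by omega
  set r := √(s : ℝ)
  have hr : r ^ 2 = s := Real.sq_sqrt (by positivity)
  have hr1 : 1 < r := Real.lt_sqrt_of_sq_lt (by norm_num; exact_mod_cast hs)
  set w := firstCollisionProb s
  have hterm (j : ℕ) : w j * ((j - r) ^ 2 / j) = w j * j - 2 * r * w j + r ^ 2 * (w j / j) := by
    rcases eq_or_ne j 0 with rfl | hj
    · simp [w, firstCollisionProb_eq_mul_div hs0]
    · field_simp
      ring
  have hmoment : ∑ j ∈ range (s + 1), w j * ((j - r) ^ 2 / j) = 2 * (ramanujanQ s - r) := by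
    simp only [hterm, sum_add_distrib, sum_sub_distrib, ← mul_sum, w, sum_firstCollisionProb,
      sum_firstCollisionProb_mul_self, sum_firstCollisionProb_div_self hs0, hr]
    field_simp
    ring
  have hpos : 0 < ∑ j ∈ range (s + 1), w j * ((j - r) ^ 2 / j) := by
    have hr1' : ((1 : ℕ) - r : ℝ) ≠ 0 := by push_cast; linarith
    calc 0 < w 1 * (((1 : ℕ) - r) ^ 2 / (1 : ℕ)) := by
          rw [show w 1 = 1 / s by simp [w, firstCollisionProb_eq_mul_div hs0, noCollisionProb_one hs0]]
          positivity
      _ ≤ _ := single_le_sum (f := fun j : ℕ => w j * ((j - r) ^ 2 / j))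
          (fun j _ => by have := firstCollisionProb_nonneg hs0 j; positivity)
          (mem_range.2 (by omega : 1 < s + 1))
  linarith

theorem rpow_ramanujanQ_le_sum_firstCollisionProb_mul_pow {s : ℕ} (hs : s ≠ 0) {x : ℝ}
    (hx : 0 < x) :
    x ^ ramanujanQ s ≤ ∑ j ∈ range (s + 1), firstCollisionProb s j * x ^ j := by
  have := (convexOn_rpow_left hx).map_sum_le (t := range (s + 1)) (p := fun j : ℕ => (j : ℝ))
    (fun j _ => firstCollisionProb_nonneg hs j) (sum_firstCollisionProb s)
    (fun _ _ => Set.mem_univ _)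
  simpa [sum_firstCollisionProb_mul_self] using this

theorem rpow_sqrt_lt_sum_firstCollisionProb_mul_pow {s : ℕ} (hs : 2 ≤ s) {x : ℝ} (hx : 1 < x) :
    x ^ √s < ∑ j ∈ range (s + 1), firstCollisionProb s j * x ^ j :=
  (Real.rpow_lt_rpow_of_exponent_lt hx (sqrt_lt_ramanujanQ hs)).trans_le
    (rpow_ramanujanQ_le_sum_firstCollisionProb_mul_pow (s := s) (by omega) (by linarith))

theorem erlangC_eq_inv_sum_firstCollisionProb_mul_pow {s : ℕ} (hs : s ≠ 0) {ρ : ℝ}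
    (hρ0 : ρ ≠ 0) (hρ1 : ρ ≠ 1) :
    erlangC s ρ = (∑ j ∈ range (s + 1), firstCollisionProb s j * ρ⁻¹ ^ j)⁻¹ := by
  have ha : (s * ρ : ℝ) ≠ 0 := mul_ne_zero (by exact_mod_cast hs) hρ0
  have h1ρ : 1 - ρ ≠ 0 := sub_ne_zero.2 (Ne.symm hρ1)
  have hgen : ∑ j ∈ range (s + 1), firstCollisionProb s j * ρ⁻¹ ^ j =
      1 + (1 - ρ) * ∑ j ∈ range s, s.descFactorial (j + 1) / (s * ρ) ^ (j + 1) := by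
    rw [sum_firstCollisionProb_mul, mul_sum, pow_zero]
    congr 1
    refine sum_congr rfl fun j _ => ?_
    unfold noCollisionProb
    rw [inv_pow, inv_pow, mul_pow, pow_succ ρ]
    field_simp
  unfold erlangC
  rw [sum_range_pow_div_factorial_eq_mul_sum_descFactorial ha, hgen]
  field_simp
  ring

/-- Harel's bound: the Erlang C formula is strictly less than ρ^{√s} for s ≥ 2. -/
theorem erlangC_lt_rpow_sqrt (s : ℕ) (hs : 2 ≤ s) (μ lam : ℝ) (hμ : 0 < μ)
    (hlam : 0 < lam) (hlt : lam < s * μ) :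
    let ρ : ℝ := lam / (s * μ)
    ((s * ρ) ^ s / (Nat.factorial s) * (1 / (1 - ρ))) /
        ((∑ k ∈ Finset.range s, (s * ρ) ^ k / (Nat.factorial k)) +
          (s * ρ) ^ s / (Nat.factorial s) * (1 / (1 - ρ)))
      < ρ ^ (Real.sqrt s) := by
  intro ρ
  have hsμ : 0 < (s : ℝ) * μ := by positivity
  have hρ0 : 0 < ρ := div_pos hlam hsμ
  have hρ1 : ρ < 1 := (div_lt_one hsμ).2 hlt
  have hbound := rpow_sqrt_lt_sum_firstCollisionProb_mul_pow hs (one_lt_inv₀ hρ0 |>.2 hρ1)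
  rw [Real.inv_rpow hρ0.le] at hbound
  change erlangC s ρ < ρ ^ √s
  rw [erlangC_eq_inv_sum_firstCollisionProb_mul_pow (by omega) hρ0.ne' hρ1.ne]
  exact inv_lt_of_inv_lt₀ (by positivity) hbound
end

section
/- Let s ≥ 2, μ > 0, and define E(λ) = (2−√s)(1−√s)·(λ² + (2μ s^{3/2}/(1−√s))·λ + μ² s^{5/2}/(√s−2)) for λ ∈ (0, sμ). If √s < 2 (and s ≥ 2), then E(λ) > 0 for all λ ∈ (0, sμ). -/
/-- Positivity of E(λ) = (2−√s)(1−√s)(λ² + (2μ s^{3/2}/(1−√s))λ + μ² s^{5/2}/(√s−2))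
on (0, sμ) when 2 ≤ s and √s < 2. -/
theorem E_pos_of_sqrt_lt_two (s μ : ℝ) (hs : 2 ≤ s) (hs2 : Real.sqrt s < 2) (hμ : 0 < μ)
    (lam : ℝ) (hlam : lam ∈ Set.Ioo (0 : ℝ) (s * μ)) :
    0 < (2 - Real.sqrt s) * (1 - Real.sqrt s) *
        (lam ^ 2 + (2 * μ * s ^ ((3 : ℝ) / 2) / (1 - Real.sqrt s)) * lam +
          μ ^ 2 * s ^ ((5 : ℝ) / 2) / (Real.sqrt s - 2)) := by
  obtain ⟨hl0, hlM⟩ := hlam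
  set r := Real.sqrt s with hrdef
  have hs0 : (0 : ℝ) ≤ s := by linarith
  have hr2 : r ^ 2 = s := Real.sq_sqrt hs0
  have hr1 : 1 < r := by
    nlinarith [Real.sqrt_nonneg s]
  have h3 : s ^ ((3 : ℝ) / 2) = r ^ 3 := by
    rw [show (3 : ℝ) / 2 = (1 / 2) * 3 by ring, Real.rpow_mul hs0,
      ← Real.sqrt_eq_rpow, show (3 : ℝ) = ((3 : ℕ) : ℝ) by norm_num,
      Real.rpow_natCast]
  have h5 : s ^ ((5 : ℝ) / 2) = r ^ 5 := by
    rw [show (5 : ℝ) / 2 = (1 / 2) * 5 by ring, Real.rpow_mul hs0,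
      ← Real.sqrt_eq_rpow, show (5 : ℝ) = ((5 : ℕ) : ℝ) by norm_num,
      Real.rpow_natCast]
  have h1ne : (1 : ℝ) - r ≠ 0 := by linarith
  have h2ne : r - 2 ≠ 0 := by linarith
  have key : (2 - r) * (1 - r) *
        (lam ^ 2 + (2 * μ * s ^ ((3 : ℝ) / 2) / (1 - r)) * lam +
          μ ^ 2 * s ^ ((5 : ℝ) / 2) / (r - 2))
      = (2 - r) * (1 - r) * lam ^ 2 + 2 * μ * r ^ 3 * (2 - r) * lam
        + (r - 1) * μ ^ 2 * r ^ 5 := by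
    rw [h3, h5]; field_simp; ring
  rw [key]
  have hlM' : lam < r ^ 2 * μ := by rw [hr2]; linarith
  nlinarith [mul_pos hl0 (sub_pos.mpr hlM'), mul_pos hμ hμ,
    mul_pos (mul_pos hl0 (sub_pos.mpr hlM')) (mul_pos (sub_pos.mpr hs2) (sub_pos.mpr hr1)),
    pow_pos (lt_trans one_pos hr1) 5, pow_pos (lt_trans one_pos hr1) 4,
    mul_pos (sub_pos.mpr hr1) (mul_pos (mul_pos hμ hμ) (pow_pos (lt_trans one_pos hr1) 5)),
    mul_pos (mul_pos (mul_pos hμ hμ) (pow_pos (lt_trans one_pos hr1) 4)) hl0]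
end

section
/- Fix x, y ∈ ℝ, H > 0, K ≥ 0, and constants A > 0 (with A = P·(c/(4πf))²/(B N₀)). Define d(q) = √((q₁−x)² + (q₂−y)² + H²) for q ∈ ℝ², g(q) = 1 + A·e^{−K d(q)}/d(q)², and t(q) = 1/ln(g(q)). If for all q in a convex open set Ω ⊂ ℝ² the condition d(q) > (1/K)·(√(2 g(q) ln g(q) / (2 g(q) − 2 − ln g(q))) − 2) holds (with the convention that the condition reads √(2g ln g/(2g−2−ln g)) < 2 + K d), then t is convex on Ω. -/
/-!
Write `t = φ ∘ d` with `φ r = 1 / ln (1 + w r)` and `w r = A e^{-K r} / r²`. The distance `d` is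
convex, being the Euclidean norm of an affine function of `q`, and positive. For `r > 0` one has
`w' = -w (K r + 2) / r`, so `φ' = w (K r + 2) / (r (1 + w) L²) ≥ 0` with `L = ln (1 + w)`, and
`φ'' = w ((K r + 2)² (2 w - L) - 2 (1 + w) L) / (r² (1 + w)² L³)`.
With `g = 1 + w`, the denominator `2 g - 2 - L = 2 w - L` is positive because `L < w`, so squaring
the hypothesis `√(2 g L / (2 g - 2 - L)) < 2 + K r` gives `φ'' > 0`. Hence `φ` is convex and
nondecreasing on the interval `d '' Ω`, and so `φ ∘ d` is convex.
-/

open Real Set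

namespace THzLink

noncomputable def snr (A K r : ℝ) : ℝ := A * exp (-K * r) / r ^ 2

noncomputable def invRate (A K r : ℝ) : ℝ := 1 / log (1 + snr A K r)

noncomputable def invRateDeriv (A K r : ℝ) : ℝ :=
  snr A K r * (K * r + 2) / (r * (1 + snr A K r) * log (1 + snr A K r) ^ 2)

noncomputable def invRateDeriv2 (A K r : ℝ) : ℝ :=
  snr A K r * ((K * r + 2) ^ 2 * (2 * snr A K r - log (1 + snr A K r)) -
      2 * (1 + snr A K r) * log (1 + snr A K r)) /
    (r ^ 2 * (1 + snr A K r) ^ 2 * log (1 + snr A K r) ^ 3)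

variable {A K r : ℝ}

lemma snr_pos (hA : 0 < A) (hr : 0 < r) : 0 < snr A K r := by
  unfold snr; positivity

lemma log_one_add_snr_pos (hA : 0 < A) (hr : 0 < r) : 0 < log (1 + snr A K r) :=
  log_pos (by linarith [snr_pos (K := K) hA hr])

lemma hasDerivAt_snr (hr : r ≠ 0) :
    HasDerivAt (snr A K) (-(snr A K r * (K * r + 2) / r)) r := by
  refine ((((hasDerivAt_id r).const_mul (-K)).exp.const_mul A).div (hasDerivAt_pow 2 r)
    (pow_ne_zero 2 hr)).congr_deriv ?_
  simp only [snr, id, Nat.cast_ofNat]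
  field_simp
  ring

lemma hasDerivAt_invRate (hA : 0 < A) (hr : 0 < r) :
    HasDerivAt (invRate A K) (invRateDeriv A K r) r := by
  have hw := snr_pos (K := K) hA hr
  have hL := log_one_add_snr_pos (K := K) hA hr
  rw [show invRate A K = fun s => (log (1 + snr A K s))⁻¹ by funext s; exact one_div _]
  refine ((((hasDerivAt_snr hr.ne').const_add 1).log (by linarith)).inv hL.ne').congr_deriv ?_
  simp only [invRateDeriv]
  field_simp

lemma hasDerivAt_invRateDeriv (hA : 0 < A) (hr : 0 < r) :
    HasDerivAt (invRateDeriv A K) (invRateDeriv2 A K r) r := by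
  have hw := snr_pos (K := K) hA hr
  have hL := log_one_add_snr_pos (K := K) hA hr
  have hg := (hasDerivAt_snr (A := A) (K := K) hr.ne').const_add 1
  refine (((hasDerivAt_snr hr.ne').mul (((hasDerivAt_id r).const_mul K).add_const 2)).div
    (((hasDerivAt_id r).mul hg).mul ((hg.log (by linarith)).pow 2))
    (mul_pos (mul_pos hr (by linarith)) (pow_pos hL 2)).ne').congr_deriv ?_
  simp only [invRateDeriv2, id, Nat.cast_ofNat, Pi.mul_apply, Pi.pow_apply]
  field_simp
  ring

lemma invRateDeriv_nonneg (hA : 0 < A) (hK : 0 ≤ K) (hr : 0 < r) : 0 ≤ invRateDeriv A K r := by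
  have hw := snr_pos (K := K) hA hr
  have hL := log_one_add_snr_pos (K := K) hA hr
  exact div_nonneg (mul_nonneg hw.le (by positivity))
    (mul_pos (mul_pos hr (by linarith)) (pow_pos hL 2)).le

lemma continuousOn_invRate (hA : 0 < A) : ContinuousOn (invRate A K) (Ioi 0) :=
  fun _ hr => (hasDerivAt_invRate hA hr).continuousAt.continuousWithinAt

lemma invRateDeriv2_nonneg (hA : 0 < A) (hr : 0 < r)
    (hcond : √(2 * (1 + snr A K r) * log (1 + snr A K r) /
      (2 * (1 + snr A K r) - 2 - log (1 + snr A K r))) < 2 + K * r) :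
    0 ≤ invRateDeriv2 A K r := by
  have hw := snr_pos (K := K) hA hr
  have hL := log_one_add_snr_pos (K := K) hA hr
  unfold invRateDeriv2
  set w := snr A K r
  set L := log (1 + w)
  have hLw : L < w := by
    linarith [log_lt_sub_one_of_pos (by linarith : 0 < 1 + w) (by linarith : 1 + w ≠ 1)]
  have hM : 0 < 2 + K * r := (sqrt_nonneg _).trans_lt hcond
  have hkey : 2 * (1 + w) * L < (2 + K * r) ^ 2 * (2 * (1 + w) - 2 - L) := by
    rwa [sqrt_lt' hM, div_lt_iff₀ (by linarith)] at hcond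
  have hnum : 0 ≤ (K * r + 2) ^ 2 * (2 * w - L) - 2 * (1 + w) * L := by
    linarith [show (2 + K * r) ^ 2 * (2 * (1 + w) - 2 - L) = (K * r + 2) ^ 2 * (2 * w - L) by ring]
  exact div_nonneg (mul_nonneg hw.le hnum)
    (mul_pos (mul_pos (pow_pos hr 2) (pow_pos (by linarith) 2)) (pow_pos hL 3)).le

lemma monotoneOn_invRate (hA : 0 < A) (hK : 0 ≤ K) : MonotoneOn (invRate A K) (Ioi 0) :=
  monotoneOn_of_hasDerivWithinAt_nonneg (convex_Ioi 0) (continuousOn_invRate hA)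
    (fun _ hr => (hasDerivAt_invRate hA (interior_subset hr)).hasDerivWithinAt)
    (fun _ hr => invRateDeriv_nonneg hA hK (interior_subset hr))

lemma convexOn_invRate {S : Set ℝ} (hS : Convex ℝ S) (hA : 0 < A) (hpos : S ⊆ Ioi 0)
    (hcond : ∀ r ∈ S, √(2 * (1 + snr A K r) * log (1 + snr A K r) /
      (2 * (1 + snr A K r) - 2 - log (1 + snr A K r))) < 2 + K * r) :
    ConvexOn ℝ S (invRate A K) :=
  convexOn_of_hasDerivWithinAt2_nonneg hS ((continuousOn_invRate hA).mono hpos)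
    (fun _ hr => (hasDerivAt_invRate hA (hpos (interior_subset hr))).hasDerivWithinAt)
    (fun _ hr => (hasDerivAt_invRateDeriv hA (hpos (interior_subset hr))).hasDerivWithinAt)
    (fun r hr => invRateDeriv2_nonneg hA (hpos (interior_subset hr)) (hcond r (interior_subset hr)))

end THzLink

lemma convexOn_sqrt_sub_sq_add_sub_sq_add_sq (x y H : ℝ) :
    ConvexOn ℝ univ (fun q : ℝ × ℝ => √((q.1 - x) ^ 2 + (q.2 - y) ^ 2 + H ^ 2)) := by
  have hnorm : ∀ q : ℝ × ℝ,
      √((q.1 - x) ^ 2 + (q.2 - y) ^ 2 + H ^ 2) = ‖!₂[q.1 - x, q.2 - y, H]‖ := by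
    intro q
    simp [EuclideanSpace.norm_eq, Fin.sum_univ_three]
  refine ⟨convex_univ, fun p _ q _ a b ha hb hab => ?_⟩
  have hlift : !₂[(a • p + b • q).1 - x, (a • p + b • q).2 - y, H] =
      a • !₂[p.1 - x, p.2 - y, H] + b • !₂[q.1 - x, q.2 - y, H] := by
    ext i
    fin_cases i <;>
      simp only [Fin.zero_eta, Fin.mk_one, Fin.reduceFinMk, Fin.isValue, Matrix.cons_val_zero,
        Matrix.cons_val_one, Matrix.cons_val, PiLp.add_apply, PiLp.smul_apply, Prod.fst_add,
        Prod.snd_add, Prod.smul_fst, Prod.smul_snd, smul_eq_mul]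
    · linear_combination x * hab
    · linear_combination y * hab
    · linear_combination -H * hab
  simp only [hnorm, hlift]
  exact (convexOn_norm convex_univ).2 (mem_univ _) (mem_univ _) ha hb hab

theorem uav_positioning_convex_general (x y H K A : ℝ) (hH : 0 < H) (hK : 0 ≤ K) (hA : 0 < A)
    (Ω : Set (ℝ × ℝ)) (hΩconv : Convex ℝ Ω)
    (d g t : (ℝ × ℝ) → ℝ)
    (hd : d = fun q => Real.sqrt ((q.1 - x) ^ 2 + (q.2 - y) ^ 2 + H ^ 2))
    (hg : g = fun q => 1 + A * Real.exp (-K * d q) / (d q) ^ 2)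
    (ht : t = fun q => 1 / Real.log (g q))
    (hcond : ∀ q ∈ Ω,
      Real.sqrt (2 * g q * Real.log (g q) / (2 * g q - 2 - Real.log (g q)))
        < 2 + K * d q) :
    ConvexOn ℝ Ω t := by
  subst hg ht
  have hd_convex : ConvexOn ℝ Ω d :=
    hd ▸ (convexOn_sqrt_sub_sq_add_sub_sq_add_sq x y H).subset (subset_univ Ω) hΩconv
  have hd_pos : d '' Ω ⊆ Ioi 0 := by
    rintro _ ⟨q, -, rfl⟩
    rw [hd]
    exact sqrt_pos.2 (add_pos_of_nonneg_of_pos (by positivity) (pow_pos hH 2))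
  have hd_image_convex : Convex ℝ (d '' Ω) :=
    (hΩconv.isPreconnected.image d (by rw [hd]; fun_prop)).convex
  have hφ_convex := THzLink.convexOn_invRate hd_image_convex hA hd_pos
    (by rintro _ ⟨q, hq, rfl⟩; exact hcond q hq)
  exact hφ_convex.comp hd_convex ((THzLink.monotoneOn_invRate hA hK).mono hd_pos)

/-- Lemma 1: the inverse spectral efficiency t(q) = 1/ln(g(q)) of a THz link, where
g(q) = 1 + A e^{−K d(q)}/d(q)² and d(q) is the 3D distance from the UAV at horizontal
position q and altitude H to the ground node at (x, y, 0), is convex on any convex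
open set Ω on which √(2 g ln g/(2g − 2 − ln g)) < 2 + K d holds. -/
theorem uav_positioning_convex (x y H K A : ℝ) (hH : 0 < H) (hK : 0 ≤ K) (hA : 0 < A)
    (Ω : Set (ℝ × ℝ)) (hΩconv : Convex ℝ Ω) (hΩopen : IsOpen Ω)
    (d g t : (ℝ × ℝ) → ℝ)
    (hd : d = fun q => Real.sqrt ((q.1 - x) ^ 2 + (q.2 - y) ^ 2 + H ^ 2))
    (hg : g = fun q => 1 + A * Real.exp (-K * d q) / (d q) ^ 2)
    (ht : t = fun q => 1 / Real.log (g q))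
    (hcond : ∀ q ∈ Ω,
      Real.sqrt (2 * g q * Real.log (g q) / (2 * g q - 2 - Real.log (g q)))
        < 2 + K * d q) :
    ConvexOn ℝ Ω t :=
  uav_positioning_convex_general x y H K A hH hK hA Ω hΩconv d g t hd hg ht hcond
end

section
/- Under the setup of the UAV-positioning objective, with g > 1, K ≥ 0, d > 0, if the scalar condition (2g − 2 − ln g)(2 + K d)² − 2 g ln g > 0 holds, then the quantity Q = g ln g (2 + K d) d² + r²·[(2g − 2 − ln g)(2 + K d)² − g ln g (2 + K d) − 2 g ln g] is strictly positive for every r with 0 ≤ r² ≤ d². -/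
/-! Q is affine in `r ^ 2`. At `r ^ 2 = 0` it is `g log g (2 + K d) d ^ 2 > 0`, and at `r ^ 2 = d ^ 2`
it collapses to `d ^ 2` times the scalar condition, so it is positive on the whole interval. -/

theorem add_mul_pos_of_pos_of_add_mul_pos {a b s D : ℝ} (ha : 0 < a) (haD : 0 < a + D * b)
    (hs : 0 ≤ s) (hsD : s ≤ D) : 0 < a + s * b := by
  rcases le_total 0 b with hb | hb
  · nlinarith [mul_nonneg hs hb]
  · nlinarith [mul_le_mul_of_nonpos_right hsD hb]

/-- Positivity of the first principal minor quantity Q in Lemma 1. -/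
theorem Q_pos (g K d : ℝ) (hg : 1 < g) (hK : 0 ≤ K) (hd : 0 < d)
    (hcond : 0 < (2 * g - 2 - Real.log g) * (2 + K * d) ^ 2 - 2 * g * Real.log g)
    (r : ℝ) (hr : r ^ 2 ≤ d ^ 2) :
    0 < g * Real.log g * (2 + K * d) * d ^ 2 +
        r ^ 2 * ((2 * g - 2 - Real.log g) * (2 + K * d) ^ 2 -
          g * Real.log g * (2 + K * d) - 2 * g * Real.log g) := by
  have hg₀ : 0 < g := by linarith
  have hlog : 0 < Real.log g := Real.log_pos hg
  refine add_mul_pos_of_pos_of_add_mul_pos (by positivity) ?_ (sq_nonneg r) hr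
  calc 0 < d ^ 2 * ((2 * g - 2 - Real.log g) * (2 + K * d) ^ 2 - 2 * g * Real.log g) := by
        positivity
    _ = _ := by ring
end
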